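/- The maximum cardinality of a trifferent code of length 4 equals 9: there exists a trifferent code C ⊆ {0,1,2}^4 with |C| = 9 (the tetra-code), and every trifferent code of length 4 has cardinality at most 9. -/

import Mathlib

def Trifferent {n : ℕ} (C : Finset (Fin n → Fin 3)) : Prop :=
  ∀ x ∈ C, ∀ y ∈ C, ∀ z ∈ C, x ≠ y → x ≠ z → y ≠ z →
    ∃ i : Fin n, x i ≠ y i ∧ x i ≠ z i ∧ y i ≠ z i

/-!
Puncturing the first coordinate: the codewords of a trifferent code whose first symbol avoids a
fixed value `v` take only two values there, so any three of them are separated by another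
coordinate. Deleting the first coordinate is then injective (on at least three words) and yields a
trifferent code of length one less. Summing over the three choices of `v` counts every codeword
twice, so `2 |C| ≤ 3 T(n)` for codes of length `n + 1`, where `T(n) ≥ 2` bounds the size of
trifferent codes of length `n`. Starting from `T(1) = 3` this gives
`T(2) ≤ 4`, `T(3) ≤ 6` and `T(4) ≤ 9`, attained by the tetracode.
-/

open Finset

lemma eq_or_eq_or_eq_of_pairwise_ne_of_fin_three {a b c : Fin 3} (hab : a ≠ b) (hac : a ≠ c)
    (hbc : b ≠ c) (v : Fin 3) : a = v ∨ b = v ∨ c = v := by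
  revert a b c v
  decide

lemma sum_card_filter_ne {α β : Type*} [DecidableEq β] [Fintype β] (s : Finset α) (f : α → β) :
    ∑ b, #{x ∈ s | f x ≠ b} = (Fintype.card β - 1) * #s := by
  have hsum : ∑ b, #{x ∈ s | f x = b} + ∑ b, #{x ∈ s | f x ≠ b} = Fintype.card β * #s := by
    simp only [← sum_add_distrib, card_filter_add_card_filter_not, sum_const, card_univ,
      smul_eq_mul]
  rw [← card_eq_sum_card_fiberwise fun x _ => mem_univ (f x)] at hsum
  rw [Nat.sub_one_mul]
  omega

namespace Trifferent

variable {n : ℕ}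

lemma mono {C D : Finset (Fin n → Fin 3)} (hC : Trifferent C) (hDC : D ⊆ C) : Trifferent D :=
  fun x hx y hy z hz => hC x (hDC hx) y (hDC hy) z (hDC hz)

section Puncture

variable {C : Finset (Fin (n + 1) → Fin 3)} {v : Fin 3}

lemma exists_tail_separating (hC : Trifferent C) (hv : ∀ x ∈ C, x 0 ≠ v)
    {x y z : Fin (n + 1) → Fin 3} (hx : x ∈ C) (hy : y ∈ C) (hz : z ∈ C)
    (hxy : x ≠ y) (hxz : x ≠ z) (hyz : y ≠ z) :
    ∃ j : Fin n, Fin.tail x j ≠ Fin.tail y j ∧ Fin.tail x j ≠ Fin.tail z j ∧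
      Fin.tail y j ≠ Fin.tail z j := by
  obtain ⟨i, hi⟩ := hC x hx y hy z hz hxy hxz hyz
  cases i using Fin.cases with
  | zero =>
    rcases eq_or_eq_or_eq_of_pairwise_ne_of_fin_three hi.1 hi.2.1 hi.2.2 v with h | h | h
    exacts [absurd h (hv x hx), absurd h (hv y hy), absurd h (hv z hz)]
  | succ j => exact ⟨j, hi⟩

lemma injOn_tail (hC : Trifferent C) (hv : ∀ x ∈ C, x 0 ≠ v) (h3 : 2 < #C) :
    Set.InjOn Fin.tail (C : Set (Fin (n + 1) → Fin 3)) := by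
  intro x hx y hy hxy
  by_contra hne
  obtain ⟨z, hz, hzxy⟩ := exists_mem_notMem_of_card_lt_card (s := {x, y}) (card_le_two.trans_lt h3)
  simp only [mem_insert, mem_singleton, not_or] at hzxy
  obtain ⟨j, hj, -⟩ := hC.exists_tail_separating hv hx hy hz hne (Ne.symm hzxy.1) (Ne.symm hzxy.2)
  exact hj (congrFun hxy j)

lemma image_tail (hC : Trifferent C) (hv : ∀ x ∈ C, x 0 ≠ v) : Trifferent (C.image Fin.tail) := by
  simp only [Trifferent, forall_mem_image]
  intro x hx y hy z hz hxy hxz hyz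
  exact hC.exists_tail_separating hv hx hy hz (ne_of_apply_ne _ hxy) (ne_of_apply_ne _ hxz)
    (ne_of_apply_ne _ hyz)

lemma card_le_of_forall_ne {m : ℕ} (hm : 2 ≤ m)
    (hbound : ∀ D : Finset (Fin n → Fin 3), Trifferent D → #D ≤ m)
    (hC : Trifferent C) (hv : ∀ x ∈ C, x 0 ≠ v) : #C ≤ m := by
  by_cases h3 : 2 < #C
  · rw [← card_image_of_injOn (hC.injOn_tail hv h3)]
    exact hbound _ (hC.image_tail hv)
  · omega

end Puncture

lemma two_mul_card_le {m : ℕ} (hm : 2 ≤ m)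
    (hbound : ∀ D : Finset (Fin n → Fin 3), Trifferent D → #D ≤ m)
    {C : Finset (Fin (n + 1) → Fin 3)} (hC : Trifferent C) : 2 * #C ≤ 3 * m :=
  calc 2 * #C = ∑ v : Fin 3, #{x ∈ C | x 0 ≠ v} := by rw [sum_card_filter_ne]; rfl
    _ ≤ ∑ _v : Fin 3, m := sum_le_sum fun v _ =>
        (hC.mono (filter_subset _ C)).card_le_of_forall_ne hm hbound fun x hx => (mem_filter.1 hx).2
    _ = 3 * m := by simp

end Trifferent

def tetracode : Finset (Fin 4 → Fin 3) :=
  univ.image fun p : Fin 3 × Fin 3 => ![p.1, p.2, p.1 + p.2, p.1 + 2 * p.2]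

set_option synthInstance.maxSize 1000 in
set_option maxRecDepth 10000 in
lemma trifferent_tetracode : Trifferent tetracode := by
  unfold Trifferent tetracode
  decide

lemma card_tetracode : #tetracode = 9 := by
  decide

theorem max_trifferent_card_length_four :
    (∃ C : Finset (Fin 4 → Fin 3), Trifferent C ∧ C.card = 9) ∧
    ∀ C : Finset (Fin 4 → Fin 3), Trifferent C → C.card ≤ 9 := by
  refine ⟨⟨tetracode, trifferent_tetracode, card_tetracode⟩, ?_⟩
  have h1 : ∀ C : Finset (Fin 1 → Fin 3), Trifferent C → #C ≤ 3 := fun C _ => by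
    simpa using C.card_le_univ
  have h2 : ∀ C : Finset (Fin 2 → Fin 3), Trifferent C → #C ≤ 4 := fun C hC => by
    have := hC.two_mul_card_le (by norm_num) h1
    omega
  have h3 : ∀ C : Finset (Fin 3 → Fin 3), Trifferent C → #C ≤ 6 := fun C hC => by
    have := hC.two_mul_card_le (by norm_num) h2
    omega
  intro C hC
  have := hC.two_mul_card_le (by norm_num) h3
  omega
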